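/- arXiv:2211.03424 — 4 statements merged into one kernel-verified Lean document; each statement's English description precedes it below -/
import Mathlib

section
/- Let n ≥ 2 be an integer and a ≥ 0 a real number. Then ∑_{g=0}^{n−1} e^{2a·cos(2πg/n)} = n·φ̂_a(0) and ∑_{g=0}^{n−1} e^{2πig/n}·e^{2a·cos(2πg/n)} = n·φ̂_a(1) (the left-hand side being a complex number equal to the real number on the right). Consequently η̂_a = φ̂_a(1)/φ̂_a(0) = φ_a(1); in particular η̂_a is real. -/
open scoped BigOperators

noncomputable def psi (n : ℕ) (a : ℝ) (j : ℕ) : ℝ :=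
  ∑' k : ℕ, a ^ (j + k * n) / (Nat.factorial (j + k * n) : ℝ)

noncomputable def phiHat (n : ℕ) (a : ℝ) (j : ℤ) : ℝ :=
  ∑ k ∈ Finset.range n, ∑ k' ∈ Finset.range n,
    if ((k' : ℤ) - (k : ℤ)) % (n : ℤ) = j % (n : ℤ) then psi n a k * psi n a k' else 0

noncomputable def phi (n : ℕ) (a : ℝ) (j : ℤ) : ℝ :=
  phiHat n a j / phiHat n a 0

noncomputable def eps (n : ℕ) (a : ℝ) : ℝ :=
  (1 + 2 * a * Real.exp a) * (1 + a ^ n * Real.exp a / (Nat.factorial n : ℝ)) ^ 2 - 1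

noncomputable def zeta (n : ℕ) (a : ℝ) : ℝ :=
  ∑ j ∈ Finset.Ico 1 n, phi n a (j : ℤ)

noncomputable def xi (n : ℕ) (a : ℝ) : ℝ :=
  sSup ((fun j : ℕ => phi n a (j : ℤ)) '' Set.Ico 1 n)

noncomputable def eta (n : ℕ) (a : ℝ) : ℝ :=
  sInf ((fun j : ℕ => phi n a ((j : ℤ) + 1) / phi n a (j : ℤ)) '' Set.Iio n)

noncomputable def alpha (n : ℕ) (b k : ℝ) : ℝ :=
  (∑ j ∈ Finset.range n,
      phi n b (j : ℤ) * (phi n k (j : ℤ)) ^ 4 *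
        (phi n k ((j : ℤ) + 1) / (phi n k (j : ℤ) * phi n k 1))) /
    (∑ j ∈ Finset.range n, phi n b (j : ℤ) * (phi n k (j : ℤ)) ^ 4)

noncomputable def rho (n : ℕ) (g : ℕ) : ℂ :=
  Complex.exp (2 * (Real.pi : ℂ) * Complex.I * (g : ℂ) / (n : ℂ))

noncomputable def etaHat (n : ℕ) (a : ℝ) : ℂ :=
  (∑ g ∈ Finset.range n, rho n g * (Real.exp (2 * a * (rho n g).re) : ℂ)) /
    (∑ g ∈ Finset.range n, (Real.exp (2 * a * (rho n g).re) : ℂ))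

lemma exp_expand (n : ℕ) (hn : n ≠ 0) (a : ℝ) (ρ : ℂ) (hρ : ρ ^ n = 1) :
    Complex.exp (a * ρ) = ∑ j ∈ Finset.range n, ρ ^ j * (psi n a j : ℂ) := by
  have : NeZero n := ⟨hn⟩
  have hρm : ∀ m : ℕ, ρ ^ m = ρ ^ (m % n) := by
    intro m
    conv_lhs => rw [← Nat.div_add_mod m n, pow_add, pow_mul, hρ, one_pow, one_mul]
  have hnormρ : ∀ m : ℕ, ‖ρ ^ m‖ = 1 := by
    have h2 : ‖ρ‖ = 1 := Complex.norm_eq_one_of_pow_eq_one hρ hn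
    intro m; rw [norm_pow, h2, one_pow]
  set f : ℕ → ℂ := fun m => ρ ^ (m % n) * ((a ^ m / (Nat.factorial m : ℝ) : ℝ) : ℂ) with hf
  have hsum : Summable f := by
    apply Summable.of_norm
    have := Real.summable_pow_div_factorial |a|
    apply this.congr
    intro m
    simp [hf, norm_mul, hnormρ, Complex.norm_real, abs_div, abs_pow, Nat.abs_cast,
      Real.norm_eq_abs]
  have hexp : Complex.exp (a * ρ) = ∑' m : ℕ, f m := by
    rw [Complex.exp_eq_exp_ℂ, NormedSpace.exp_eq_tsum_div]
    refine tsum_congr fun m => ?_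
    rw [hf]
    push_cast
    rw [mul_pow, ← hρm]
    ring
  rw [hexp]
  rw [← (Nat.divModEquiv n).symm.tsum_eq f]
  rw [← (Equiv.prodComm (Fin n) ℕ).tsum_eq]
  have hsum2 : Summable (f ∘ ⇑(Nat.divModEquiv n).symm) :=
    (Equiv.summable_iff _).mpr hsum
  have hsum3 : Summable ((f ∘ ⇑(Nat.divModEquiv n).symm) ∘ ⇑(Equiv.prodComm (Fin n) ℕ)) :=
    (Equiv.summable_iff _).mpr hsum2
  have hg : Summable (fun p : Fin n × ℕ => f (p.2 * n + (p.1 : ℕ))) := hsum3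
  rw [show (fun p : Fin n × ℕ => f ((Nat.divModEquiv n).symm ((Equiv.prodComm (Fin n) ℕ) p)))
      = fun p : Fin n × ℕ => f (p.2 * n + p.1) from rfl]
  rw [Summable.tsum_prod' hg (fun b => (hg.prod_factor b))]
  rw [tsum_fintype]
  rw [← Fin.sum_univ_eq_sum_range (fun j => ρ ^ j * (psi n a j : ℂ)) n]
  refine Finset.sum_congr rfl fun r _ => ?_
  have hmod : ∀ q : ℕ, (q * n + (r : ℕ)) % n = (r : ℕ) := by
    intro q; rw [Nat.add_comm, Nat.add_mul_mod_self_right, Nat.mod_eq_of_lt r.is_lt]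
  have : ∀ q : ℕ, f (q * n + (r : ℕ))
      = ρ ^ (r : ℕ) * ((a ^ ((r:ℕ) + q * n) / (Nat.factorial ((r:ℕ) + q * n) : ℝ) : ℝ) : ℂ) := by
    intro q; rw [hf]
    simp only [Nat.add_comm (q * n) (r : ℕ), Nat.add_mul_mod_self_right,
      Nat.mod_eq_of_lt r.is_lt]
  rw [tsum_congr this, tsum_mul_left, psi, Complex.ofReal_tsum]

lemma root_sum (n : ℕ) (hn : n ≠ 0) (m : ℕ) :
    ∑ g ∈ Finset.range n, (Complex.exp (2 * (Real.pi : ℂ) * Complex.I / n) ^ m) ^ g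
      = if n ∣ m then (n : ℂ) else 0 := by
  have hprim := Complex.isPrimitiveRoot_exp n hn
  by_cases h : n ∣ m
  · rw [(hprim.pow_eq_one_iff_dvd m).mpr h, if_pos h]
    simp
  · have hne : Complex.exp (2 * (Real.pi : ℂ) * Complex.I / n) ^ m ≠ 1 := by
      rw [Ne, hprim.pow_eq_one_iff_dvd m]; exact h
    rw [geom_sum_eq hne, if_neg h, pow_right_comm, hprim.pow_eq_one, one_pow, sub_self,
      zero_div]

lemma rho_eq (n g : ℕ) :
    rho n g = Complex.exp (((2 * Real.pi * g / n : ℝ) : ℂ) * Complex.I) := by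
  unfold rho; congr 1; push_cast; ring

lemma rho_re (n g : ℕ) :
    (rho n g).re = Real.cos (2 * Real.pi * g / n) := by
  rw [rho_eq n g, Complex.exp_ofReal_mul_I_re]

lemma rho_pow (n g : ℕ) :
    rho n g = Complex.exp (2 * (Real.pi : ℂ) * Complex.I / n) ^ g := by
  rw [← Complex.exp_nat_mul]; unfold rho; congr 1; ring

lemma rho_pow_n (n g : ℕ) (hn : n ≠ 0) : (rho n g) ^ n = 1 := by
  rw [rho_pow n g, pow_right_comm, (Complex.isPrimitiveRoot_exp n hn).pow_eq_one, one_pow]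

lemma rho_inv (n g : ℕ) (hn : n ≠ 0) :
    (rho n g) ^ (n - 1) = Complex.exp (-(((2 * Real.pi * g / n : ℝ) : ℂ)) * Complex.I) := by
  have h1 : rho n g * (rho n g) ^ (n - 1) = 1 := by
    rw [← pow_succ', Nat.sub_add_cancel (Nat.one_le_iff_ne_zero.mpr hn)]
    exact rho_pow_n n g hn
  have h2 : rho n g * Complex.exp (-(((2 * Real.pi * g / n : ℝ) : ℂ)) * Complex.I) = 1 := by
    rw [rho_eq n g, ← Complex.exp_add, show (((2 * Real.pi * g / n : ℝ) : ℂ) * Complex.I +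
      -(((2 * Real.pi * g / n : ℝ) : ℂ)) * Complex.I) = 0 by ring, Complex.exp_zero]
  have hne : rho n g ≠ 0 := by rw [rho_eq]; exact Complex.exp_ne_zero _
  exact mul_left_cancel₀ hne (h1.trans h2.symm)

lemma exp_cos (n g : ℕ) (hn : n ≠ 0) (a : ℝ) :
    ((Real.exp (2 * a * Real.cos (2 * Real.pi * g / n)) : ℝ) : ℂ)
      = Complex.exp (a * rho n g) * Complex.exp (a * (rho n g) ^ (n - 1)) := by
  set θ : ℝ := 2 * Real.pi * g / n with hθ
  rw [← Complex.exp_add, Complex.ofReal_exp]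
  congr 1
  rw [rho_inv n g hn, rho_eq n g, hθ]
  simp only [Complex.ofReal_mul, Complex.ofReal_ofNat, Complex.ofReal_cos]
  linear_combination (a : ℂ) * Complex.two_cos ((θ : ℝ) : ℂ)

lemma cond_iff (n : ℕ) (hn : n ≠ 0) (j k k' : ℕ) :
    n ∣ (j + k + (n - 1) * k') ↔ ((k' : ℤ) - (k : ℤ)) % (n : ℤ) = (j : ℤ) % (n : ℤ) := by
  rw [← Int.natCast_dvd_natCast,
    show ((j + k + (n - 1) * k' : ℕ) : ℤ) = ((j : ℤ) + k - k') + n * k' by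
      push_cast [Nat.cast_sub (Nat.one_le_iff_ne_zero.mpr hn)]; ring]
  have h1 : (n : ℤ) ∣ ((j : ℤ) + k - k') + n * k' ↔ (n : ℤ) ∣ ((j : ℤ) + k - k') :=
    ⟨fun h => by simpa using dvd_sub h (dvd_mul_right (n : ℤ) (k' : ℤ)),
     fun h => dvd_add h (dvd_mul_right _ _)⟩
  rw [h1, show (((k' : ℤ) - k) % n = (j : ℤ) % n) ↔ Int.ModEq n ((k' : ℤ) - k) j from Iff.rfl,
    Int.modEq_iff_dvd, show (j : ℤ) - ((k' : ℤ) - k) = (j : ℤ) + k - k' by ring]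

lemma sum_eq (n : ℕ) (hn : 2 ≤ n) (a : ℝ) (j : ℕ) :
    ∑ g ∈ Finset.range n, (rho n g) ^ j *
        ((Real.exp (2 * a * Real.cos (2 * Real.pi * (g : ℝ) / (n : ℝ))) : ℝ) : ℂ)
      = (n : ℂ) * ((phiHat n a (j : ℤ) : ℝ) : ℂ) := by
  have hn0 : n ≠ 0 := by omega
  have step1 : ∀ g ∈ Finset.range n, (rho n g) ^ j *
      ((Real.exp (2 * a * Real.cos (2 * Real.pi * (g : ℝ) / (n : ℝ))) : ℝ) : ℂ)
      = ∑ k ∈ Finset.range n, ∑ k' ∈ Finset.range n,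
          ((psi n a k * psi n a k' : ℝ) : ℂ)
            * (Complex.exp (2 * (Real.pi : ℂ) * Complex.I / n) ^ (j + k + (n - 1) * k')) ^ g := by
    intro g _
    rw [exp_cos n g hn0 a,
      exp_expand n hn0 a (rho n g) (rho_pow_n n g hn0),
      exp_expand n hn0 a ((rho n g) ^ (n - 1))
        (by rw [pow_right_comm, rho_pow_n n g hn0, one_pow]),
      Finset.sum_mul_sum, Finset.mul_sum]
    refine Finset.sum_congr rfl fun k _ => ?_
    rw [Finset.mul_sum]
    refine Finset.sum_congr rfl fun k' _ => ?_
    rw [rho_pow n g]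
    simp only [← pow_mul, Complex.ofReal_mul]
    ring
  rw [Finset.sum_congr rfl step1, Finset.sum_comm,
    Finset.sum_congr rfl (fun k (_ : k ∈ Finset.range n) => Finset.sum_comm),
    show ((phiHat n a (j : ℤ) : ℝ) : ℂ) = ∑ k ∈ Finset.range n, ∑ k' ∈ Finset.range n,
        if ((k' : ℤ) - (k : ℤ)) % (n : ℤ) = (j : ℤ) % (n : ℤ)
        then ((psi n a k * psi n a k' : ℝ) : ℂ) else 0 by
      unfold phiHat
      push_cast [apply_ite (fun x : ℝ => (x : ℂ))]
      rfl,
    Finset.mul_sum]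
  refine Finset.sum_congr rfl fun k _ => ?_
  rw [Finset.mul_sum]
  refine Finset.sum_congr rfl fun k' _ => ?_
  rw [← Finset.mul_sum, root_sum n hn0]
  by_cases h : n ∣ j + k + (n - 1) * k'
  · rw [if_pos h, if_pos ((cond_iff n hn0 j k k').mp h)]; ring
  · rw [if_neg h, if_neg (fun hc => h ((cond_iff n hn0 j k k').mpr hc)), mul_zero, mul_zero]

theorem statement11 (n : ℕ) (hn : 2 ≤ n) (a : ℝ) (ha : 0 ≤ a) :
    (∑ g ∈ Finset.range n,
        (Real.exp (2 * a * Real.cos (2 * Real.pi * (g : ℝ) / (n : ℝ))) : ℂ)) =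
      (n : ℂ) * (phiHat n a 0 : ℂ) ∧
    (∑ g ∈ Finset.range n,
        rho n g * (Real.exp (2 * a * Real.cos (2 * Real.pi * (g : ℝ) / (n : ℝ))) : ℂ)) =
      (n : ℂ) * (phiHat n a 1 : ℂ) ∧
    etaHat n a = (phiHat n a 1 / phiHat n a 0 : ℂ) ∧
    etaHat n a = (phi n a 1 : ℂ) := by
  have hn0 : n ≠ 0 := by omega
  have h0 := sum_eq n hn a 0
  have h1 := sum_eq n hn a 1
  simp only [pow_zero, one_mul, Nat.cast_zero] at h0
  simp only [pow_one, Nat.cast_one] at h1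
  refine ⟨h0, h1, ?_, ?_⟩
  · unfold etaHat
    simp only [rho_re]
    rw [h0, h1, mul_div_mul_left _ _ (Nat.cast_ne_zero.mpr hn0 : (n : ℂ) ≠ 0)]
  · unfold etaHat
    simp only [rho_re]
    rw [h0, h1, mul_div_mul_left _ _ (Nat.cast_ne_zero.mpr hn0 : (n : ℂ) ≠ 0)]
    unfold phi
    norm_cast
end

section
/- Let n ≥ 2 be an integer and let a ≥ 0 be a real number satisfying a(1 + ε_a) ≤ 1. Then ξ_a = φ_a(1); that is, the maximum of φ_a(j) over j ∈ {1,…,n−1} is attained at j = 1. -/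
open scoped BigOperators

section PsiLemmas

variable (n : ℕ) (a : ℝ)

lemma exp_eq_tsum' : Real.exp a = ∑' m : ℕ, a ^ m / (Nat.factorial m : ℝ) := by
  rw [Real.exp_eq_exp_ℝ, NormedSpace.exp_eq_tsum_div]

lemma summable_psi (hn : 1 ≤ n) (j : ℕ) :
    Summable (fun k : ℕ => a ^ (j + k * n) / (Nat.factorial (j + k * n) : ℝ)) := by
  have hinj : Function.Injective (fun k : ℕ => j + k * n) := by
    intro x y hxy
    simp only [add_right_inj] at hxy
    exact Nat.eq_of_mul_eq_mul_right hn hxy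
  exact (Real.summable_pow_div_factorial a).comp_injective hinj

lemma psi_nonneg (ha : 0 ≤ a) (j : ℕ) : 0 ≤ psi n a j :=
  tsum_nonneg fun k => by positivity

lemma le_psi (hn : 1 ≤ n) (ha : 0 ≤ a) (j : ℕ) :
    a ^ j / (Nat.factorial j : ℝ) ≤ psi n a j := by
  have h := Summable.le_tsum (summable_psi n a hn j) 0 (fun k _ => by positivity)
  simpa [psi] using h

end PsiLemmas

section More
variable (n : ℕ) (a : ℝ)

lemma tsum_sect_le (hn : 1 ≤ n) (ha : 0 ≤ a) :
    ∑' k : ℕ, a ^ (k * n) / (Nat.factorial (k * n) : ℝ) ≤ Real.exp a := by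
  rw [exp_eq_tsum' a]
  refine Summable.tsum_le_tsum_of_inj (fun k => k * n) ?_ (fun c _ => by positivity)
    (fun i => le_rfl) ?_ (Real.summable_pow_div_factorial a)
  · intro x y hxy
    simpa using Nat.eq_of_mul_eq_mul_right hn hxy
  · have := summable_psi n a hn 0
    simpa using this

lemma psi_le' (hn : 1 ≤ n) (ha : 0 ≤ a) (j : ℕ) :
    psi n a j ≤ a ^ j / (Nat.factorial j : ℝ) *
      (1 + a ^ n * Real.exp a / (Nat.factorial n : ℝ)) := by
  have hsum := summable_psi n a hn j
  rw [psi, Summable.tsum_eq_zero_add hsum]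
  have h0 : a ^ (j + 0 * n) / (Nat.factorial (j + 0 * n) : ℝ) = a ^ j / (Nat.factorial j : ℝ) := by
    norm_num
  rw [h0, mul_add, mul_one]
  gcongr _ + ?_
  -- tail bound
  have hshift : Summable (fun k : ℕ => a ^ (j + (k + 1) * n) / (Nat.factorial (j + (k + 1) * n) : ℝ)) := by
    have hinj : Function.Injective (fun k : ℕ => k + 1) := fun x y h => by
      simpa using h
    exact hsum.comp_injective hinj
  have hg : Summable (fun k : ℕ =>
      a ^ j / (Nat.factorial j : ℝ) * (a ^ n / (Nat.factorial n : ℝ)) *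
        (a ^ (k * n) / (Nat.factorial (k * n) : ℝ))) := by
    apply Summable.mul_left
    have := summable_psi n a hn 0
    simpa using this
  calc ∑' k : ℕ, a ^ (j + (k + 1) * n) / (Nat.factorial (j + (k + 1) * n) : ℝ)
      ≤ ∑' k : ℕ, a ^ j / (Nat.factorial j : ℝ) * (a ^ n / (Nat.factorial n : ℝ)) *
          (a ^ (k * n) / (Nat.factorial (k * n) : ℝ)) := by
        refine Summable.tsum_le_tsum (fun k => ?_) hshift hg
        have hpow : a ^ (j + (k + 1) * n) = a ^ j * a ^ n * a ^ (k * n) := by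
          rw [← pow_add, ← pow_add]; ring_nf
        have hfac : (Nat.factorial j * Nat.factorial n * Nat.factorial (k * n) : ℕ)
            ≤ Nat.factorial (j + (k + 1) * n) := by
          have h1 : (Nat.factorial j * Nat.factorial n) ∣ Nat.factorial (j + n) :=
            Nat.factorial_mul_factorial_dvd_factorial_add j n
          have h2 : (Nat.factorial (j + n) * Nat.factorial (k * n)) ∣
              Nat.factorial (j + n + k * n) :=
            Nat.factorial_mul_factorial_dvd_factorial_add (j + n) (k * n)
          have h3 : (Nat.factorial j * Nat.factorial n * Nat.factorial (k * n)) ∣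
              Nat.factorial (j + n + k * n) :=
            dvd_trans (mul_dvd_mul_right h1 _) h2
          have h4 : j + n + k * n = j + (k + 1) * n := by ring
          rw [h4] at h3
          exact Nat.le_of_dvd (Nat.factorial_pos _) h3
        rw [hpow]
        rw [div_mul_div_comm, div_mul_div_comm]
        exact div_le_div_of_nonneg_left (by positivity) (by positivity) (by exact_mod_cast hfac)
      _ = a ^ j / (Nat.factorial j : ℝ) * (a ^ n / (Nat.factorial n : ℝ)) *
          ∑' k : ℕ, a ^ (k * n) / (Nat.factorial (k * n) : ℝ) := tsum_mul_left
      _ ≤ a ^ j / (Nat.factorial j : ℝ) * (a ^ n / (Nat.factorial n : ℝ)) * Real.exp a := by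
        have := tsum_sect_le n a hn ha
        gcongr
      _ = a ^ j / (Nat.factorial j : ℝ) * (a ^ n * Real.exp a / (Nat.factorial n : ℝ)) := by
        ring

end More

section Mono
variable (n : ℕ) (a : ℝ)

lemma psi_mono (hn : 1 ≤ n) (ha : 0 ≤ a)
    (hac : a * (1 + a ^ n * Real.exp a / (Nat.factorial n : ℝ)) ≤ 1)
    {i j : ℕ} (hij : i ≤ j) : psi n a j ≤ psi n a i := by
  have hq : 0 ≤ a ^ n * Real.exp a / (Nat.factorial n : ℝ) := by positivity
  have hc1 : (1:ℝ) ≤ 1 + a ^ n * Real.exp a / (Nat.factorial n : ℝ) := by linarith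
  have ha1 : a ≤ 1 := by nlinarith
  rcases eq_or_lt_of_le hij with rfl | hlt
  · exact le_rfl
  · calc psi n a j
        ≤ a ^ j / (Nat.factorial j : ℝ) *
          (1 + a ^ n * Real.exp a / (Nat.factorial n : ℝ)) := psi_le' n a hn ha j
      _ ≤ (a ^ (i+1) / (Nat.factorial i : ℝ)) *
          (1 + a ^ n * Real.exp a / (Nat.factorial n : ℝ)) := by
          gcongr ?_ * _
          exact div_le_div₀ (by positivity) (pow_le_pow_of_le_one ha ha1 (by omega))
            (by exact_mod_cast Nat.factorial_pos i)
            (by exact_mod_cast Nat.factorial_le hij)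
      _ ≤ a ^ i / (Nat.factorial i : ℝ) := by
          have h1 : (a ^ (i+1) / (Nat.factorial i : ℝ)) *
              (1 + a ^ n * Real.exp a / (Nat.factorial n : ℝ))
              = (a ^ i / (Nat.factorial i : ℝ)) *
                (a * (1 + a ^ n * Real.exp a / (Nat.factorial n : ℝ))) := by
            rw [pow_succ]; ring
          rw [h1]
          nlinarith [div_nonneg (pow_nonneg ha i) (Nat.cast_nonneg (Nat.factorial i))]
      _ ≤ psi n a i := le_psi n a hn ha i

end Mono

section PhiHat
variable (n : ℕ) (a : ℝ)

lemma phiHat_congr {j₁ j₂ : ℤ} (h : j₁ % (n:ℤ) = j₂ % (n:ℤ)) :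
    phiHat n a j₁ = phiHat n a j₂ := by
  unfold phiHat; rw [h]

lemma emod_zero_iff (m x : ℤ) : x % m = 0 ↔ m ∣ x := by
  rw [← Int.dvd_iff_emod_eq_zero]

lemma phiHat_neg (j : ℤ) : phiHat n a (-j) = phiHat n a j := by
  unfold phiHat
  rw [Finset.sum_comm]
  refine Finset.sum_congr rfl fun k _ => Finset.sum_congr rfl fun k' _ => ?_
  rw [mul_comm]
  congr 1
  simp only [eq_iff_iff]
  rw [Int.emod_eq_emod_iff_emod_sub_eq_zero, Int.emod_eq_emod_iff_emod_sub_eq_zero,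
    emod_zero_iff, emod_zero_iff]
  constructor
  · intro hh
    have e : (k':ℤ) - k - j = -(((k:ℤ) - k') - -j) := by ring
    rw [e]
    exact Dvd.dvd.neg_right hh
  · intro hh
    have e : (k:ℤ) - k' - -j = -(((k':ℤ) - k) - j) := by ring
    rw [e]
    exact Dvd.dvd.neg_right hh

lemma phiHat_row (hn : 1 ≤ n) (j : ℕ) (hj : j < n) :
    phiHat n a (j:ℤ) = ∑ k ∈ Finset.range n, psi n a k * psi n a ((k + j) % n) := by
  unfold phiHat
  refine Finset.sum_congr rfl fun k hk => ?_
  rw [Finset.sum_eq_single ((k + j) % n)]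
  · rw [if_pos]
    have hcast : (((k + j) % n : ℕ) : ℤ) = ((k:ℤ) + j) % n := by
      push_cast
      rfl
    rw [hcast, Int.emod_eq_emod_iff_emod_sub_eq_zero]
    have e : ((k:ℤ) + j) % n - (k:ℤ) - j = (((k:ℤ) + j) % n - ((k:ℤ) + j)) := by ring
    rw [e, Int.sub_emod, Int.emod_emod_of_dvd _ dvd_rfl, sub_self, Int.zero_emod]
  · intro k' hk' hne
    rw [if_neg]
    intro hcond
    apply hne
    rw [Int.emod_eq_emod_iff_emod_sub_eq_zero] at hcond
    have h1 : ((k':ℤ) - ((k:ℤ) + j)) % n = 0 := by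
      have e : (k':ℤ) - ((k:ℤ) + j) = (k':ℤ) - k - j := by ring
      rw [e]; exact hcond
    have h2 : (k':ℤ) % n = ((k:ℤ) + j) % n :=
      Int.emod_eq_emod_iff_emod_sub_eq_zero.mpr h1
    have h3 : (k':ℤ) % n = (k':ℤ) :=
      Int.emod_eq_of_lt (by positivity) (by exact_mod_cast Finset.mem_range.mp hk')
    have hcast : (((k + j) % n : ℕ) : ℤ) = ((k:ℤ) + j) % n := by
      push_cast
      rfl
    have : (k':ℤ) = (((k + j) % n : ℕ) : ℤ) := by rw [hcast, ← h2, h3]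
    exact_mod_cast this
  · intro habs
    exact absurd (Finset.mem_range.mpr (Nat.mod_lt _ (by omega))) habs

lemma one_le_phiHat_zero (hn : 1 ≤ n) (ha : 0 ≤ a) : 1 ≤ phiHat n a 0 := by
  have hpsi0 : 1 ≤ psi n a 0 := by
    have := le_psi n a hn ha 0
    simpa using this
  have h0mem : 0 ∈ Finset.range n := Finset.mem_range.mpr (by omega)
  have hterm : ∀ k ∈ Finset.range n, 0 ≤ ∑ k' ∈ Finset.range n,
      if ((k' : ℤ) - (k : ℤ)) % (n : ℤ) = 0 % (n : ℤ) then psi n a k * psi n a k' else 0 := by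
    intro k _
    apply Finset.sum_nonneg
    intro k' _
    split
    · exact mul_nonneg (psi_nonneg n a ha k) (psi_nonneg n a ha k')
    · exact le_rfl
  have inner0 : psi n a 0 * psi n a 0 ≤ ∑ k' ∈ Finset.range n,
      if ((k' : ℤ) - ((0:ℕ) : ℤ)) % (n : ℤ) = 0 % (n : ℤ) then psi n a 0 * psi n a k' else 0 := by
    have h := Finset.single_le_sum
      (f := fun k' : ℕ => if ((k' : ℤ) - ((0:ℕ) : ℤ)) % (n : ℤ) = 0 % (n : ℤ)
        then psi n a 0 * psi n a k' else 0)
      (fun k' _ => by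
        split
        · exact mul_nonneg (psi_nonneg n a ha 0) (psi_nonneg n a ha k')
        · exact le_rfl) h0mem
    simpa using h
  calc (1:ℝ) ≤ psi n a 0 * psi n a 0 := by nlinarith
    _ ≤ _ := inner0
    _ ≤ phiHat n a 0 := by
        unfold phiHat
        exact Finset.single_le_sum hterm h0mem

end PhiHat

section Core
variable (n : ℕ) (a : ℝ)

lemma sum_exp_le (ha : 0 ≤ a) (m : ℕ) :
    ∑ i ∈ Finset.range m, a ^ i / (Nat.factorial i : ℝ) ≤ Real.exp a := by
  rw [exp_eq_tsum' a]
  exact Summable.sum_le_tsum _ (fun i _ => by positivity) (Real.summable_pow_div_factorial a)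

set_option maxHeartbeats 1000000 in
lemma core (ha : 0 ≤ a) (h : a * (1 + eps n a) ≤ 1)
    (j : ℕ) (hj2 : 2 ≤ j) (hjn : 2 * j ≤ n) :
    phiHat n a (j : ℤ) ≤ phiHat n a ((1:ℕ) : ℤ) := by
  have hn : 1 ≤ n := by omega
  obtain ⟨E, hE⟩ : ∃ E : ℝ, E = Real.exp a := ⟨_, rfl⟩
  obtain ⟨c, hcdef⟩ : ∃ c : ℝ, c = 1 + a ^ n * E / (Nat.factorial n : ℝ) := ⟨_, rfl⟩
  have hE0 : 0 < E := hE ▸ Real.exp_pos a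
  have hE1 : 1 ≤ E := hE ▸ Real.one_le_exp ha
  have hq0 : 0 ≤ a ^ n * E / (Nat.factorial n : ℝ) := by positivity
  have hc1 : 1 ≤ c := by rw [hcdef]; linarith
  have h2 : a * ((1 + 2 * a * E) * c ^ 2) ≤ 1 := by
    have : 1 + eps n a = (1 + 2 * a * E) * c ^ 2 := by rw [eps, hcdef, hE]; ring
    linarith [this ▸ h]
  have haE : 0 ≤ a * E := mul_nonneg ha (le_of_lt hE0)
  have hac2 : a * c ^ 2 ≤ 1 := by nlinarith [sq_nonneg c]
  have hac : a * c ≤ 1 := by nlinarith [sq_nonneg c]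
  have ha1 : a ≤ 1 := by nlinarith
  have hEle : E ≤ 1 + 2 * a * E := by
    have h3 : 1 - a ≤ Real.exp (-a) := by linarith [Real.add_one_le_exp (-a)]
    have h4 : Real.exp (-a) * E = 1 := by rw [hE, ← Real.exp_add]; simp
    nlinarith
  have hacE : a * c ^ 2 * E ≤ 1 := by nlinarith [sq_nonneg c, mul_nonneg (mul_nonneg ha (sq_nonneg c)) (le_of_lt hE0)]
  have hac' : a * (1 + a ^ n * Real.exp a / (Nat.factorial n : ℝ)) ≤ 1 := by
    rw [← hE, ← hcdef]; exact hac
  have hmono : ∀ {i i' : ℕ}, i ≤ i' → psi n a i' ≤ psi n a i :=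
    fun hii => psi_mono n a hn ha hac' hii
  have hpsile : ∀ m : ℕ, psi n a m ≤ a ^ m / (Nat.factorial m : ℝ) * c := by
    intro m
    have := psi_le' n a hn ha m
    rw [← hE, ← hcdef] at this
    exact this
  have hpsi0 : 1 ≤ psi n a 0 := by simpa using le_psi n a hn ha 0
  have hpsi1 : a ≤ psi n a 1 := by simpa using le_psi n a hn ha 1
  have hpsin : ∀ m, 0 ≤ psi n a m := psi_nonneg n a ha
  rw [phiHat_row n a hn j (by omega), phiHat_row n a hn 1 (by omega)]
  -- the bad-block sum
  obtain ⟨SL, hSLdef⟩ : ∃ SL : ℝ, SL = ∑ k ∈ Finset.Icc (n - j) (n - 2),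
      psi n a k * psi n a ((k + j) % n) := ⟨_, rfl⟩
  -- bound on SL
  have hSL : SL ≤ c ^ 2 * E * (a ^ (n - j) / (Nat.factorial (n - j) : ℝ)) := by
    have hIccIco : Finset.Icc (n - j) (n - 2) = Finset.Ico (n - j) (n - 1) := by
      have e : n - 1 = (n - 2) + 1 := by omega
      rw [e, Finset.Ico_add_one_right_eq_Icc]
    have hre : SL = ∑ i ∈ Finset.range (j - 1),
        psi n a (n - j + i) * psi n a ((n - j + i + j) % n) := by
      rw [hSLdef, hIccIco, Finset.sum_Ico_eq_sum_range]
      have e2 : n - 1 - (n - j) = j - 1 := by omega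
      rw [e2]
    rw [hre]
    calc ∑ i ∈ Finset.range (j - 1), psi n a (n - j + i) * psi n a ((n - j + i + j) % n)
        ≤ ∑ i ∈ Finset.range (j - 1),
            c ^ 2 * (a ^ (n - j) / (Nat.factorial (n - j) : ℝ)) * (a ^ i / (Nat.factorial i : ℝ)) := by
          apply Finset.sum_le_sum
          intro i hi
          have hi' : i < j - 1 := Finset.mem_range.mp hi
          have hmod : (n - j + i + j) % n = i := by
            have e : n - j + i + j = i + n := by omega
            rw [e, Nat.add_mod_right, Nat.mod_eq_of_lt (by omega)]
          rw [hmod]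
          calc psi n a (n - j + i) * psi n a i
              ≤ (a ^ (n - j + i) / (Nat.factorial (n - j + i) : ℝ) * c) *
                (a ^ i / (Nat.factorial i : ℝ) * c) :=
                mul_le_mul (hpsile _) (hpsile _) (hpsin _)
                  (mul_nonneg (by positivity) (by linarith))
            _ = c ^ 2 * ((a ^ (n - j + i) * a ^ i) /
                ((Nat.factorial (n - j + i) : ℝ) * (Nat.factorial i : ℝ))) := by
                ring
            _ ≤ c ^ 2 * ((a ^ (n - j) * a ^ i) /
                ((Nat.factorial (n - j) : ℝ) * (Nat.factorial i : ℝ))) := by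
                gcongr c ^ 2 * ?_
                apply div_le_div₀ (by positivity) ?_ (by positivity) ?_
                · rw [← pow_add, ← pow_add]
                  exact pow_le_pow_of_le_one ha ha1 (by omega)
                · have : (Nat.factorial (n - j) : ℝ) ≤ (Nat.factorial (n - j + i) : ℝ) := by
                    exact_mod_cast Nat.factorial_le (by omega)
                  exact mul_le_mul_of_nonneg_right this (by positivity)
            _ = c ^ 2 * (a ^ (n - j) / (Nat.factorial (n - j) : ℝ)) * (a ^ i / (Nat.factorial i : ℝ)) := by
                ring
      _ = c ^ 2 * (a ^ (n - j) / (Nat.factorial (n - j) : ℝ)) *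
            ∑ i ∈ Finset.range (j - 1), a ^ i / (Nat.factorial i : ℝ) := by
          rw [Finset.mul_sum]
      _ ≤ c ^ 2 * (a ^ (n - j) / (Nat.factorial (n - j) : ℝ)) * E := by
          rw [hE]
          exact mul_le_mul_of_nonneg_left (sum_exp_le a ha (j - 1)) (by positivity)
      _ = c ^ 2 * E * (a ^ (n - j) / (Nat.factorial (n - j) : ℝ)) := by ring
  -- u_{n-j} ≤ u_j
  have hunj : a ^ (n - j) / (Nat.factorial (n - j) : ℝ) ≤ a ^ j / (Nat.factorial j : ℝ) := by
    apply div_le_div₀ (by positivity) (pow_le_pow_of_le_one ha ha1 (by omega))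
      (by exact_mod_cast Nat.factorial_pos j)
      (by exact_mod_cast Nat.factorial_le (by omega))
  have hujs : a ^ j / (Nat.factorial j : ℝ) ≤ a ^ 2 / 2 := by
    apply div_le_div₀ (by positivity) (pow_le_pow_of_le_one ha ha1 hj2) (by norm_num) ?_
    have : (2:ℕ) ≤ Nat.factorial j := by
      calc (2:ℕ) = Nat.factorial 2 := rfl
        _ ≤ Nat.factorial j := Nat.factorial_le hj2
    exact_mod_cast this
  have huj0 : 0 ≤ a ^ j / (Nat.factorial j : ℝ) := by positivity
  -- key scalar inequality
  have hkey2 : c ^ 2 * E * (a ^ j / (Nat.factorial j : ℝ)) + c * (a ^ j / (Nat.factorial j : ℝ)) ≤ a := by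
    have hpos : (0:ℝ) ≤ c ^ 2 * E + c := by positivity
    have hh1 : (c ^ 2 * E + c) * a ≤ 2 := by nlinarith
    have hh2 : (a ^ j / (Nat.factorial j : ℝ)) * (c ^ 2 * E + c) ≤ a ^ 2 / 2 * (c ^ 2 * E + c) :=
      mul_le_mul_of_nonneg_right hujs hpos
    nlinarith [mul_le_mul_of_nonneg_left hh1 (by linarith : (0:ℝ) ≤ a / 2)]
  have hc0 : (0:ℝ) ≤ c := by linarith
  have hcE0 : (0:ℝ) ≤ c ^ 2 * E := mul_nonneg (sq_nonneg c) (le_of_lt hE0)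
  -- the main pointwise inequality at k = 0
  have key0 : psi n a 0 * psi n a ((0 + j) % n) + SL ≤ psi n a 0 * psi n a ((0 + 1) % n) := by
    simp only [Nat.zero_add]
    rw [Nat.mod_eq_of_lt (show j < n by omega), Nat.mod_eq_of_lt (show 1 < n by omega)]
    have F1 : SL ≤ c ^ 2 * E * (a ^ j / (Nat.factorial j : ℝ)) :=
      le_trans hSL (mul_le_mul_of_nonneg_left hunj hcE0)
    have F4 : psi n a j ≤ a ^ j / (Nat.factorial j : ℝ) * c := hpsile j
    have F6 : psi n a j ≤ psi n a 1 := hmono (by omega)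
    have F7 : 0 ≤ (psi n a 0 - 1) * (psi n a 1 - psi n a j) :=
      mul_nonneg (by linarith) (by linarith)
    have F8 : SL ≤ psi n a 1 - psi n a j := by linarith
    nlinarith [F7, F8]
  have hsub : Finset.Icc (n - j) (n - 2) ⊆ Finset.range n := by
    intro x hx
    rw [Finset.mem_Icc] at hx
    rw [Finset.mem_range]
    omega
  have hpoint : ∀ k ∈ Finset.range n,
      psi n a k * psi n a ((k + j) % n) ≤ psi n a k * psi n a ((k + 1) % n)
        + ((if k = 0 then -SL else 0)
          + (if k ∈ Finset.Icc (n - j) (n - 2) then psi n a k * psi n a ((k + j) % n) else 0)) := by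
    intro k hk
    have hkn : k < n := Finset.mem_range.mp hk
    by_cases hk0 : k = 0
    · subst hk0
      rw [if_pos rfl, if_neg (by rw [Finset.mem_Icc]; omega)]
      linarith [key0]
    · rw [if_neg hk0]
      by_cases hkI : k ∈ Finset.Icc (n - j) (n - 2)
      · rw [if_pos hkI]
        have : 0 ≤ psi n a k * psi n a ((k + 1) % n) := mul_nonneg (hpsin _) (hpsin _)
        linarith
      · rw [if_neg hkI]
        rw [Finset.mem_Icc] at hkI
        have hle : psi n a ((k + j) % n) ≤ psi n a ((k + 1) % n) := by
          rcases (by omega : k + j ≤ n - 1 ∨ k = n - 1) with hcase | hcase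
          · rw [Nat.mod_eq_of_lt (by omega), Nat.mod_eq_of_lt (by omega)]
            exact hmono (by omega)
          · subst hcase
            have e1 : (n - 1 + 1) % n = 0 := by
              have e : n - 1 + 1 = n := by omega
              rw [e, Nat.mod_self]
            have e2 : (n - 1 + j) % n = j - 1 := by
              have e : n - 1 + j = (j - 1) + n := by omega
              rw [e, Nat.add_mod_right, Nat.mod_eq_of_lt (by omega)]
            rw [e1, e2]
            exact hmono (Nat.zero_le _)
        have := mul_le_mul_of_nonneg_left hle (hpsin k)
        linarith
  calc ∑ k ∈ Finset.range n, psi n a k * psi n a ((k + j) % n)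
      ≤ ∑ k ∈ Finset.range n, (psi n a k * psi n a ((k + 1) % n)
        + ((if k = 0 then -SL else 0)
          + (if k ∈ Finset.Icc (n - j) (n - 2) then psi n a k * psi n a ((k + j) % n) else 0))) :=
        Finset.sum_le_sum hpoint
    _ = ∑ k ∈ Finset.range n, psi n a k * psi n a ((k + 1) % n)
        + ((∑ k ∈ Finset.range n, if k = 0 then -SL else 0)
          + ∑ k ∈ Finset.range n,
              if k ∈ Finset.Icc (n - j) (n - 2) then psi n a k * psi n a ((k + j) % n) else 0) := by
        rw [Finset.sum_add_distrib, Finset.sum_add_distrib]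
    _ = ∑ k ∈ Finset.range n, psi n a k * psi n a ((k + 1) % n) := by
        rw [Finset.sum_ite_eq' (Finset.range n) 0 (fun _ => -SL),
          Finset.sum_ite_mem, Finset.inter_eq_right.mpr hsub,
          if_pos (Finset.mem_range.mpr (show 0 < n by omega)), ← hSLdef]
        ring

end Core

section Final
variable (n : ℕ) (a : ℝ)

lemma phiHat_flip (j : ℕ) (hj : j ≤ n) :
    phiHat n a (j : ℤ) = phiHat n a ((n - j : ℕ) : ℤ) := by
  rw [← phiHat_neg n a (j : ℤ)]
  apply phiHat_congr
  have e : ((n - j : ℕ) : ℤ) = (n : ℤ) - j := by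
    push_cast [Nat.cast_sub hj]
    ring
  rw [e, Int.emod_eq_emod_iff_emod_sub_eq_zero]
  have e2 : -(j:ℤ) - ((n:ℤ) - j) = -(n:ℤ) := by ring
  rw [e2]
  simp

lemma key (hn : 2 ≤ n) (ha : 0 ≤ a) (h : a * (1 + eps n a) ≤ 1)
    (j : ℕ) (hj1 : 1 ≤ j) (hjn : j < n) :
    phiHat n a (j : ℤ) ≤ phiHat n a ((1:ℕ) : ℤ) := by
  by_cases hsm : 2 * j ≤ n
  · rcases eq_or_lt_of_le hj1 with rfl | hj2
    · exact le_rfl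
    · exact core n a ha h j (by omega) hsm
  · rw [phiHat_flip n a j (by omega)]
    rcases eq_or_lt_of_le (show 1 ≤ n - j by omega) with hq | hq
    · rw [← hq]
    · exact core n a ha h (n - j) (by omega) (by omega)


theorem statement12 (n : ℕ) (hn : 2 ≤ n) (a : ℝ) (ha : 0 ≤ a)
    (h : a * (1 + eps n a) ≤ 1) : xi n a = phi n a 1 := by
  have h0 : 1 ≤ phiHat n a 0 := one_le_phiHat_zero n a (by omega) ha
  have h1eq : ((1:ℕ) : ℤ) = (1 : ℤ) := by norm_num
  have hmem : phi n a 1 ∈ (fun j : ℕ => phi n a (j : ℤ)) '' Set.Ico 1 n :=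
    ⟨1, ⟨le_refl 1, by omega⟩, by norm_num⟩
  have hub : ∀ x ∈ (fun j : ℕ => phi n a (j : ℤ)) '' Set.Ico 1 n, x ≤ phi n a 1 := by
    rintro x ⟨j, ⟨hj1, hjn⟩, rfl⟩
    have hkey := key n a hn ha h j hj1 hjn
    rw [h1eq] at hkey
    unfold phi
    exact (div_le_div_iff_of_pos_right (by linarith)).mpr hkey
  exact IsGreatest.csSup_eq ⟨hmem, hub⟩



end Final
end

section
/- Let m ≥ 2, L ≥ 1, P ≥ 0 be integers and let ζ ≥ 0 and ξ ∈ (0,1) be real numbers with (16m)^2·ζ < ξ. Define B₁ := ∑_{i=0}^{P} ∑_{j=max(1,2i)}^{L} C(L, j−2i)·C(P, i)·∑_{k=j−i+1}^{∞} ∑_{k'=max(j, 3j−3i−k)}^{∞} (16m)^{2k}·ζ^k·ξ^{L+k'−2j}. Then B₁ ≤ [(16m)^2·ζ·ξ^{−1}·ξ^L / ((1−ξ)(1−(16m)^2·ζ·ξ^{−1}))]·[(1+(16m)^2·ζ·ξ^{−2})^P·(1+(16m)^2·ζ)^L − 1] + [(16m)^2·ζ·ξ^L / ((1−ξ)(1−(16m)^2·ζ))]·[(1+(16m)^2·ζ·ξ^{−2})^P·(1+(16m)^4·ζ^2·ξ^{−1})^L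 − 1]. -/
set_option maxHeartbeats 1000000

open scoped BigOperators
open Finset

lemma inner_bound (a ξ : ℝ) (ha0 : 0 ≤ a) (haξ : a < ξ) (hξ0 : 0 < ξ) (hξ1 : ξ < 1)
    (L i j : ℕ) (hij : 2 * i ≤ j) (hj1 : 1 ≤ j) (hjL : j ≤ L) :
    (∑' u : ℕ, ∑' v : ℕ,
        a ^ (j - i + 1 + u) *
          ξ ^ ((L : ℤ) +
            (max (j : ℤ) (3 * (j : ℤ) - 3 * (i : ℤ) - ((j - i + 1 + u : ℕ) : ℤ)) + (v : ℤ))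
            - 2 * (j : ℤ))) ≤
      (1 - ξ)⁻¹ * (1 - a / ξ)⁻¹ * (a * ξ ^ (L - 1)) * ((a / ξ ^ 2) ^ i * a ^ (j - 2 * i)) +
      (1 - ξ)⁻¹ * (1 - a)⁻¹ * (a * ξ ^ L) * ((a / ξ ^ 2) ^ i * (a ^ 2 / ξ) ^ (j - 2 * i)) := by
  have hξne : ξ ≠ 0 := ne_of_gt hξ0
  have ha1 : a < 1 := haξ.trans hξ1
  have h1ξ : (0:ℝ) < 1 - ξ := by linarith
  have h1a : (0:ℝ) < 1 - a := by linarith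
  have hr0 : 0 ≤ a / ξ := div_nonneg ha0 hξ0.le
  have hr1 : a / ξ < 1 := (div_lt_one hξ0).2 haξ
  have h1r : (0:ℝ) < 1 - a / ξ := by linarith
  set s := j - 2 * i with hs
  set M : ℕ → ℤ := fun u => max (j : ℤ) (3 * (j : ℤ) - 3 * (i : ℤ) - ((j - i + 1 + u : ℕ) : ℤ))
    with hMdef
  set e : ℕ → ℤ := fun u => (L : ℤ) + M u - 2 * (j : ℤ) with hedef
  have hMj : ∀ u, (j : ℤ) ≤ M u := fun u => le_max_left _ _
  have he0 : ∀ u, 0 ≤ e u := by intro u; have := hMj u; simp only [hedef]; omega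
  set f : ℕ → ℝ := fun u => a ^ (j - i + 1 + u) * ξ ^ (e u) * (1 - ξ)⁻¹ with hfdef
  -- inner v-sum
  have hv : ∀ u : ℕ, (∑' v : ℕ,
      a ^ (j - i + 1 + u) *
        ξ ^ ((L : ℤ) + (M u + (v : ℤ)) - 2 * (j : ℤ))) = f u := by
    intro u
    have h1 : ∀ v : ℕ, a ^ (j - i + 1 + u) *
        ξ ^ ((L : ℤ) + (M u + (v : ℤ)) - 2 * (j : ℤ))
        = (a ^ (j - i + 1 + u) * ξ ^ (e u)) * ξ ^ v := by
      intro v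
      rw [show (L : ℤ) + (M u + (v : ℤ)) - 2 * (j : ℤ) = e u + (v : ℤ) by simp only [hedef]; ring,
        zpow_add₀ hξne, zpow_natCast]
      ring
    rw [tsum_congr h1, tsum_mul_left, tsum_geometric_of_lt_one hξ0.le hξ1, hfdef]
  have hf0 : ∀ u, 0 ≤ f u := by
    intro u
    exact mul_nonneg (mul_nonneg (pow_nonneg ha0 _) (zpow_pos hξ0 _).le) (by positivity)
  have hξe1 : ∀ u, ξ ^ (e u) ≤ 1 := by
    intro u
    rw [show e u = ((e u).toNat : ℤ) by rw [Int.toNat_of_nonneg (he0 u)], zpow_natCast]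
    exact pow_le_one₀ hξ0.le hξ1.le
  have hfsum : Summable f := by
    apply Summable.of_nonneg_of_le hf0 (f := fun u => (a ^ (j - i + 1) * (1 - ξ)⁻¹) * a ^ u)
    · intro u
      calc f u ≤ a ^ (j - i + 1 + u) * 1 * (1 - ξ)⁻¹ := by
            apply mul_le_mul_of_nonneg_right _ (by positivity)
            exact mul_le_mul_of_nonneg_left (hξe1 u) (pow_nonneg ha0 _)
        _ = (a ^ (j - i + 1) * (1 - ξ)⁻¹) * a ^ u := by rw [pow_add]; ring
    · exact (summable_geometric_of_lt_one ha0 ha1).mul_left _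
  -- tail values
  have hMtail : ∀ u : ℕ, M (u + s) = (j : ℤ) := by
    intro u
    simp only [hMdef]
    rw [max_eq_left (by omega)]
  have htail : ∀ u : ℕ, f (u + s) = (a ^ (j - i + 1 + s) * ξ ^ ((L : ℤ) - (j : ℤ)) * (1 - ξ)⁻¹) * a ^ u := by
    intro u
    simp only [hfdef, hedef, hMtail u]
    rw [show (L : ℤ) + (j:ℤ) - 2 * (j:ℤ) = (L:ℤ) - (j:ℤ) by ring,
      show j - i + 1 + (u + s) = (j - i + 1 + s) + u by omega, pow_add]
    ring
  have htailsum : ∑' u : ℕ, f (u + s)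
      = a ^ (j - i + 1 + s) * ξ ^ ((L : ℤ) - (j : ℤ)) * (1 - ξ)⁻¹ * (1 - a)⁻¹ := by
    rw [tsum_congr htail, tsum_mul_left, tsum_geometric_of_lt_one ha0 ha1]
  -- finite part
  have hMfin : ∀ u : ℕ, u < s → M u = 2 * (j:ℤ) - 2 * (i:ℤ) - 1 - (u:ℤ) := by
    intro u hu
    simp only [hMdef]
    rw [max_eq_right (by omega)]
    omega
  have hfin : ∀ u ∈ range s, f u
      = (a ^ (j - i + 1) * ξ ^ ((L : ℤ) - 2 * (i:ℤ) - 1) * (1 - ξ)⁻¹) * (a / ξ) ^ u := by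
    intro u hu
    rw [mem_range] at hu
    simp only [hfdef, hedef, hMfin u hu]
    rw [show (L : ℤ) + (2 * (j:ℤ) - 2 * (i:ℤ) - 1 - (u:ℤ)) - 2 * (j:ℤ)
        = ((L:ℤ) - 2*(i:ℤ) - 1) + (-(u:ℤ)) by ring,
      zpow_add₀ hξne, zpow_neg, zpow_natCast, pow_add, div_pow]
    ring
  have hgeo : ∑ u ∈ range s, (a / ξ) ^ u ≤ (1 - a / ξ)⁻¹ := by
    calc ∑ u ∈ range s, (a / ξ) ^ u ≤ ∑' u : ℕ, (a / ξ) ^ u :=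
          Summable.sum_le_tsum _ (fun u _ => pow_nonneg hr0 u) (summable_geometric_of_lt_one hr0 hr1)
      _ = (1 - a / ξ)⁻¹ := tsum_geometric_of_lt_one hr0 hr1
  have hfinsum : ∑ u ∈ range s, f u
      ≤ a ^ (j - i + 1) * ξ ^ ((L : ℤ) - 2 * (i:ℤ) - 1) * (1 - ξ)⁻¹ * (1 - a / ξ)⁻¹ := by
    rw [Finset.sum_congr rfl hfin, ← Finset.mul_sum]
    have hC : 0 ≤ a ^ (j - i + 1) * ξ ^ ((L : ℤ) - 2 * (i:ℤ) - 1) * (1 - ξ)⁻¹ :=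
      mul_nonneg (mul_nonneg (pow_nonneg ha0 _) (zpow_pos hξ0 _).le) (by positivity)
    calc _ ≤ (a ^ (j - i + 1) * ξ ^ ((L : ℤ) - 2 * (i:ℤ) - 1) * (1 - ξ)⁻¹) * (1 - a / ξ)⁻¹ :=
          mul_le_mul_of_nonneg_left hgeo hC
      _ = _ := by ring
  -- algebra for the two pieces
  have hfirsteq : a ^ (j - i + 1) * ξ ^ ((L : ℤ) - 2 * (i:ℤ) - 1) * (1 - ξ)⁻¹ * (1 - a / ξ)⁻¹
      = (1 - ξ)⁻¹ * (1 - a / ξ)⁻¹ * (a * ξ ^ (L - 1)) * ((a / ξ ^ 2) ^ i * a ^ s) := by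
    have h1 : ξ ^ ((L : ℤ) - 2 * (i:ℤ) - 1) = ξ ^ (L - 1) / (ξ ^ 2) ^ i := by
      rw [eq_div_iff (by positivity), ← pow_mul, ← zpow_natCast ξ (L-1), ← zpow_natCast ξ (2*i),
        ← zpow_add₀ hξne]
      congr 1
      omega
    have h2 : a ^ (j - i + 1) = a * a ^ i * a ^ s := by
      rw [show j - i + 1 = 1 + (i + s) by omega, pow_add, pow_add, pow_one]
      ring
    rw [h1, h2, div_pow]
    ring
  have hsecondeq : a ^ (j - i + 1 + s) * ξ ^ ((L : ℤ) - (j : ℤ)) * (1 - ξ)⁻¹ * (1 - a)⁻¹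
      = (1 - ξ)⁻¹ * (1 - a)⁻¹ * (a * ξ ^ L) * ((a / ξ ^ 2) ^ i * (a ^ 2 / ξ) ^ s) := by
    have h1 : ξ ^ ((L : ℤ) - (j:ℤ)) = ξ ^ L / ((ξ ^ 2) ^ i * ξ ^ s) := by
      rw [eq_div_iff (by positivity), ← pow_mul, ← pow_add, ← zpow_natCast ξ L,
        ← zpow_natCast ξ (2*i + s), ← zpow_add₀ hξne]
      congr 1
      omega
    have h2 : a ^ (j - i + 1 + s) = a * a ^ i * (a ^ 2) ^ s := by
      rw [show j - i + 1 + s = 1 + (i + 2 * s) by omega, pow_add, pow_add, pow_one, pow_mul]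
      ring
    rw [h1, h2, div_pow, div_pow]
    field_simp
  -- assemble
  calc (∑' u : ℕ, ∑' v : ℕ,
        a ^ (j - i + 1 + u) *
          ξ ^ ((L : ℤ) +
            (max (j : ℤ) (3 * (j : ℤ) - 3 * (i : ℤ) - ((j - i + 1 + u : ℕ) : ℤ)) + (v : ℤ))
            - 2 * (j : ℤ)))
      = ∑' u : ℕ, f u := tsum_congr hv
    _ = (∑ u ∈ range s, f u) + ∑' u : ℕ, f (u + s) := (Summable.sum_add_tsum_nat_add s hfsum).symm
    _ ≤ (1 - ξ)⁻¹ * (1 - a / ξ)⁻¹ * (a * ξ ^ (L - 1)) * ((a / ξ ^ 2) ^ i * a ^ s) +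
        (1 - ξ)⁻¹ * (1 - a)⁻¹ * (a * ξ ^ L) * ((a / ξ ^ 2) ^ i * (a ^ 2 / ξ) ^ s) := by
        rw [htailsum, hsecondeq]
        exact add_le_add_left (hfirsteq ▸ hfinsum) _

lemma binom_sum (n : ℕ) (x : ℝ) :
    ∑ s ∈ range (n + 1), (n.choose s : ℝ) * x ^ s = (1 + x) ^ n := by
  rw [add_comm (1:ℝ) x, add_pow]
  apply sum_congr rfl
  intro s _
  simp [mul_comm]

lemma outer_sum_bound (X W : ℝ) (hX : 0 ≤ X) (hW : 0 ≤ W) (P L : ℕ) :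
    ∑ i ∈ range (P + 1), (P.choose i : ℝ) * X ^ i *
      ∑ j ∈ Finset.Icc (max 1 (2 * i)) L, (L.choose (j - 2 * i) : ℝ) * W ^ (j - 2 * i)
    ≤ (1 + X) ^ P * (1 + W) ^ L - 1 := by
  have hg0 : ∀ s : ℕ, 0 ≤ (L.choose s : ℝ) * W ^ s := fun s => by positivity
  have hinner : ∀ i : ℕ,
      (∑ j ∈ Finset.Icc (max 1 (2 * i)) L, (L.choose (j - 2 * i) : ℝ) * W ^ (j - 2 * i))
      ≤ (1 + W) ^ L - (if i = 0 then 1 else 0) := by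
    intro i
    have hinj : ∀ x ∈ Finset.Icc (max 1 (2 * i)) L, ∀ y ∈ Finset.Icc (max 1 (2 * i)) L,
        x - 2 * i = y - 2 * i → x = y := by
      intro x hx y hy hxy
      rw [Finset.mem_Icc] at hx hy
      have hx2 : 2 * i ≤ x := le_trans (le_max_right 1 (2*i)) hx.1
      have hy2 : 2 * i ≤ y := le_trans (le_max_right 1 (2*i)) hy.1
      omega
    have himg : (∑ j ∈ Finset.Icc (max 1 (2 * i)) L, (L.choose (j - 2 * i) : ℝ) * W ^ (j - 2 * i))
        = ∑ s ∈ (Finset.Icc (max 1 (2 * i)) L).image (fun j => j - 2 * i),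
            (L.choose s : ℝ) * W ^ s := by rw [Finset.sum_image hinj]
    rw [himg]
    by_cases hi : i = 0
    · subst hi
      rw [if_pos rfl]
      have hsub : (Finset.Icc (max 1 (2 * 0)) L).image (fun j => j - 2 * 0)
          ⊆ (range (L + 1)).erase 0 := by
        intro s hsimg
        simp only [Finset.mem_image, Finset.mem_Icc] at hsimg
        obtain ⟨j, ⟨hj1, hjL⟩, rfl⟩ := hsimg
        simp only [Finset.mem_erase, Finset.mem_range]
        omega
      calc _ ≤ ∑ s ∈ (range (L + 1)).erase 0, (L.choose s : ℝ) * W ^ s :=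
            Finset.sum_le_sum_of_subset_of_nonneg hsub (fun s _ _ => hg0 s)
        _ = (1 + W) ^ L - 1 := by
            have := Finset.add_sum_erase (range (L + 1)) (fun s => (L.choose s : ℝ) * W ^ s)
              (Finset.mem_range.2 (Nat.succ_pos L))
            rw [binom_sum] at this
            simp only [Nat.choose_zero_right, pow_zero, Nat.cast_one, one_mul] at this
            linarith
    · rw [if_neg hi]
      have hsub : (Finset.Icc (max 1 (2 * i)) L).image (fun j => j - 2 * i)
          ⊆ range (L + 1) := by
        intro s hsimg
        simp only [Finset.mem_image, Finset.mem_Icc] at hsimg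
        obtain ⟨j, ⟨hj1, hjL⟩, rfl⟩ := hsimg
        simp only [Finset.mem_range]
        omega
      calc _ ≤ ∑ s ∈ range (L + 1), (L.choose s : ℝ) * W ^ s :=
            Finset.sum_le_sum_of_subset_of_nonneg hsub (fun s _ _ => hg0 s)
        _ = (1 + W) ^ L - 0 := by rw [binom_sum, sub_zero]
  calc ∑ i ∈ range (P + 1), (P.choose i : ℝ) * X ^ i *
        ∑ j ∈ Finset.Icc (max 1 (2 * i)) L, (L.choose (j - 2 * i) : ℝ) * W ^ (j - 2 * i)
      ≤ ∑ i ∈ range (P + 1), (P.choose i : ℝ) * X ^ i *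
          ((1 + W) ^ L - (if i = 0 then 1 else 0)) := by
        apply Finset.sum_le_sum
        intro i _
        exact mul_le_mul_of_nonneg_left (hinner i) (by positivity)
    _ = (∑ i ∈ range (P + 1), (P.choose i : ℝ) * X ^ i) * (1 + W) ^ L
        - ∑ i ∈ range (P + 1), (P.choose i : ℝ) * X ^ i * (if i = 0 then 1 else 0) := by
        rw [Finset.sum_mul, ← Finset.sum_sub_distrib]
        apply sum_congr rfl
        intro i _
        ring
    _ = (1 + X) ^ P * (1 + W) ^ L - 1 := by
        rw [binom_sum]
        congr 1
        rw [Finset.sum_eq_single 0]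
        · simp
        · intro b _ hb; rw [if_neg hb, mul_zero]
        · intro habs; exact absurd (Finset.mem_range.2 (Nat.succ_pos P)) habs



theorem statement17 (m L P : ℕ) (hm : 2 ≤ m) (hL : 1 ≤ L) (ζ ξ : ℝ)
    (hζ : 0 ≤ ζ) (hξ0 : 0 < ξ) (hξ1 : ξ < 1)
    (h : (16 * (m : ℝ)) ^ 2 * ζ < ξ) :
    (∑ i ∈ Finset.range (P + 1), ∑ j ∈ Finset.Icc (max 1 (2 * i)) L,
        (Nat.choose L (j - 2 * i) : ℝ) * (Nat.choose P i : ℝ) *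
          ∑' u : ℕ, ∑' v : ℕ,
            (16 * (m : ℝ)) ^ (2 * (j - i + 1 + u)) * ζ ^ (j - i + 1 + u) *
              ξ ^ ((L : ℤ) +
                (max (j : ℤ) (3 * (j : ℤ) - 3 * (i : ℤ) - ((j - i + 1 + u : ℕ) : ℤ)) + (v : ℤ))
                - 2 * (j : ℤ))) ≤
      (16 * (m : ℝ)) ^ 2 * ζ / ξ * ξ ^ L /
          ((1 - ξ) * (1 - (16 * (m : ℝ)) ^ 2 * ζ / ξ)) *
        ((1 + (16 * (m : ℝ)) ^ 2 * ζ / ξ ^ 2) ^ P * (1 + (16 * (m : ℝ)) ^ 2 * ζ) ^ L - 1) +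
      (16 * (m : ℝ)) ^ 2 * ζ * ξ ^ L /
          ((1 - ξ) * (1 - (16 * (m : ℝ)) ^ 2 * ζ)) *
        ((1 + (16 * (m : ℝ)) ^ 2 * ζ / ξ ^ 2) ^ P *
          (1 + (16 * (m : ℝ)) ^ 4 * ζ ^ 2 / ξ) ^ L - 1) := by
  have hξne : ξ ≠ 0 := ne_of_gt hξ0
  set a : ℝ := (16 * (m : ℝ)) ^ 2 * ζ with ha
  have ha0 : 0 ≤ a := by positivity
  have haξ : a < ξ := h
  have ha1 : a < 1 := haξ.trans hξ1
  have h1ξ : (0:ℝ) < 1 - ξ := by linarith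
  have h1a : (0:ℝ) < 1 - a := by linarith
  have h1r : (0:ℝ) < 1 - a / ξ := by
    have : a / ξ < 1 := (div_lt_one hξ0).2 haξ
    linarith
  set K₁ : ℝ := (1 - ξ)⁻¹ * (1 - a / ξ)⁻¹ * (a * ξ ^ (L - 1)) with hK₁
  set K₂ : ℝ := (1 - ξ)⁻¹ * (1 - a)⁻¹ * (a * ξ ^ L) with hK₂
  have hK₁0 : 0 ≤ K₁ := by rw [hK₁]; positivity
  have hK₂0 : 0 ≤ K₂ := by rw [hK₂]; positivity
  -- step 1: rewrite the coupling constants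
  have hterm : ∀ i j : ℕ, (∑' u : ℕ, ∑' v : ℕ,
      (16 * (m : ℝ)) ^ (2 * (j - i + 1 + u)) * ζ ^ (j - i + 1 + u) *
        ξ ^ ((L : ℤ) +
          (max (j : ℤ) (3 * (j : ℤ) - 3 * (i : ℤ) - ((j - i + 1 + u : ℕ) : ℤ)) + (v : ℤ))
          - 2 * (j : ℤ)))
      = ∑' u : ℕ, ∑' v : ℕ,
        a ^ (j - i + 1 + u) *
          ξ ^ ((L : ℤ) +
            (max (j : ℤ) (3 * (j : ℤ) - 3 * (i : ℤ) - ((j - i + 1 + u : ℕ) : ℤ)) + (v : ℤ))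
            - 2 * (j : ℤ)) := by
    intro i j
    apply tsum_congr; intro u; apply tsum_congr; intro v
    rw [ha, pow_mul, ← mul_pow]
  -- step 2: apply the inner bound
  have hstep2 : (∑ i ∈ Finset.range (P + 1), ∑ j ∈ Finset.Icc (max 1 (2 * i)) L,
        (Nat.choose L (j - 2 * i) : ℝ) * (Nat.choose P i : ℝ) *
          ∑' u : ℕ, ∑' v : ℕ,
            (16 * (m : ℝ)) ^ (2 * (j - i + 1 + u)) * ζ ^ (j - i + 1 + u) *
              ξ ^ ((L : ℤ) +
                (max (j : ℤ) (3 * (j : ℤ) - 3 * (i : ℤ) - ((j - i + 1 + u : ℕ) : ℤ)) + (v : ℤ))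
                - 2 * (j : ℤ)))
      ≤ ∑ i ∈ Finset.range (P + 1), ∑ j ∈ Finset.Icc (max 1 (2 * i)) L,
        (Nat.choose L (j - 2 * i) : ℝ) * (Nat.choose P i : ℝ) *
          (K₁ * ((a / ξ ^ 2) ^ i * a ^ (j - 2 * i)) +
           K₂ * ((a / ξ ^ 2) ^ i * (a ^ 2 / ξ) ^ (j - 2 * i))) := by
    apply Finset.sum_le_sum
    intro i _
    apply Finset.sum_le_sum
    intro j hj
    rw [Finset.mem_Icc] at hj
    have hij : 2 * i ≤ j := le_trans (le_max_right 1 (2*i)) hj.1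
    have hj1 : 1 ≤ j := le_trans (le_max_left 1 (2*i)) hj.1
    apply mul_le_mul_of_nonneg_left _ (by positivity)
    rw [hterm i j]
    have := inner_bound a ξ ha0 haξ hξ0 hξ1 L i j hij hj1 hj.2
    calc _ ≤ _ := this
      _ = K₁ * ((a / ξ ^ 2) ^ i * a ^ (j - 2 * i)) +
          K₂ * ((a / ξ ^ 2) ^ i * (a ^ 2 / ξ) ^ (j - 2 * i)) := by rw [hK₁, hK₂]
  -- step 3: split and factor
  have hstep3 : (∑ i ∈ Finset.range (P + 1), ∑ j ∈ Finset.Icc (max 1 (2 * i)) L,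
        (Nat.choose L (j - 2 * i) : ℝ) * (Nat.choose P i : ℝ) *
          (K₁ * ((a / ξ ^ 2) ^ i * a ^ (j - 2 * i)) +
           K₂ * ((a / ξ ^ 2) ^ i * (a ^ 2 / ξ) ^ (j - 2 * i))))
      = K₁ * (∑ i ∈ Finset.range (P + 1), (Nat.choose P i : ℝ) * (a / ξ ^ 2) ^ i *
            ∑ j ∈ Finset.Icc (max 1 (2 * i)) L, (Nat.choose L (j - 2 * i) : ℝ) * a ^ (j - 2 * i))
        + K₂ * (∑ i ∈ Finset.range (P + 1), (Nat.choose P i : ℝ) * (a / ξ ^ 2) ^ i *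
            ∑ j ∈ Finset.Icc (max 1 (2 * i)) L,
              (Nat.choose L (j - 2 * i) : ℝ) * (a ^ 2 / ξ) ^ (j - 2 * i)) := by
    rw [Finset.mul_sum, Finset.mul_sum, ← Finset.sum_add_distrib]
    apply sum_congr rfl
    intro i _
    simp only [Finset.mul_sum]
    rw [← Finset.sum_add_distrib]
    apply sum_congr rfl
    intro j _
    ring
  -- step 4: binomial bounds
  have hb1 := outer_sum_bound (a / ξ ^ 2) a (by positivity) ha0 P L
  have hb2 := outer_sum_bound (a / ξ ^ 2) (a ^ 2 / ξ) (by positivity) (by positivity) P L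
  -- step 5: identify the coefficients
  have hpowL : ξ ^ L = ξ ^ (L - 1) * ξ := by
    rw [← pow_succ]
    congr 1
    omega
  have hc1 : K₁ = a / ξ * ξ ^ L / ((1 - ξ) * (1 - a / ξ)) := by
    rw [hK₁, hpowL]
    field_simp
  have hc2 : K₂ = a * ξ ^ L / ((1 - ξ) * (1 - a)) := by
    rw [hK₂]
    field_simp
  have ha4 : (16 * (m : ℝ)) ^ 4 * ζ ^ 2 = a ^ 2 := by rw [ha]; ring
  calc _ ≤ _ := hstep2
    _ = _ := hstep3
    _ ≤ K₁ * ((1 + a / ξ ^ 2) ^ P * (1 + a) ^ L - 1)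
        + K₂ * ((1 + a / ξ ^ 2) ^ P * (1 + a ^ 2 / ξ) ^ L - 1) :=
      add_le_add (mul_le_mul_of_nonneg_left hb1 hK₁0) (mul_le_mul_of_nonneg_left hb2 hK₂0)
    _ = _ := by rw [hc1, hc2, ha4]
end

section
/- Let m ≥ 2 and L ≥ 1 be integers and let ζ ≥ 0 and ξ ∈ (0,1) be real numbers with (16m)^2·ζ < ξ. Define B₃ := ∑_{j=0}^{L} C(L, j+1)·(j+1)·∑_{k=j+2}^{∞} ∑_{k'=4j+max(0, j+6−k)}^{∞} (16m)^{2k}·ζ^k·ξ^{L+k'−2j}. Then B₃ ≤ [ξ^L·(16m)^4·ζ^2·L·(1+(16m)^2·ζ·ξ^2)^L/(1−ξ)]·[ξ^4/(1−(16m)^2·ζ·ξ^{−1}) + (16m)^8·ζ^4/(1−(16m)^2·ζ)]. -/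
open scoped BigOperators

theorem statement19 (m L : ℕ) (hm : 2 ≤ m) (hL : 1 ≤ L) (ζ ξ : ℝ)
    (hζ : 0 ≤ ζ) (hξ0 : 0 < ξ) (hξ1 : ξ < 1)
    (h : (16 * (m : ℝ)) ^ 2 * ζ < ξ) :
    (∑ j ∈ Finset.range (L + 1),
        (Nat.choose L (j + 1) : ℝ) * ((j : ℝ) + 1) *
          ∑' u : ℕ, ∑' v : ℕ,
            (16 * (m : ℝ)) ^ (2 * (j + 2 + u)) * ζ ^ (j + 2 + u) *
              ξ ^ ((L : ℤ) +
                (4 * (j : ℤ) + max 0 ((j : ℤ) + 6 - ((j + 2 + u : ℕ) : ℤ)) + (v : ℤ))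
                - 2 * (j : ℤ))) ≤
      ξ ^ L * (16 * (m : ℝ)) ^ 4 * ζ ^ 2 * (L : ℝ) *
          (1 + (16 * (m : ℝ)) ^ 2 * ζ * ξ ^ 2) ^ L / (1 - ξ) *
        (ξ ^ 4 / (1 - (16 * (m : ℝ)) ^ 2 * ζ / ξ) +
          (16 * (m : ℝ)) ^ 8 * ζ ^ 4 / (1 - (16 * (m : ℝ)) ^ 2 * ζ)) := by
  set a : ℝ := (16 * (m : ℝ)) ^ 2 * ζ with ha_def
  have ha0 : 0 ≤ a := by positivity
  have haξ : a < ξ := h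
  have ha1 : a < 1 := lt_trans haξ hξ1
  have h1ξ : (0:ℝ) < 1 - ξ := by linarith
  have h1a : (0:ℝ) < 1 - a := by linarith
  have hq0 : 0 ≤ a / ξ := div_nonneg ha0 hξ0.le
  have hq1 : a / ξ < 1 := (div_lt_one hξ0).2 haξ
  have h1q : (0:ℝ) < 1 - a / ξ := by linarith
  have hgξ : Summable (fun n : ℕ => ξ ^ n) := summable_geometric_of_lt_one hξ0.le hξ1
  have hga : Summable (fun n : ℕ => a ^ n) := summable_geometric_of_lt_one ha0 ha1
  set K : ℝ := ξ ^ 4 / (1 - a / ξ) + a ^ 4 / (1 - a) with hK_def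
  have hK0 : 0 ≤ K :=
    add_nonneg (div_nonneg (by positivity) h1q.le) (div_nonneg (by positivity) h1a.le)
  set g : ℕ → ℝ := fun u => a ^ u * ξ ^ (4 - u) with hg_def
  have hg0 : ∀ u, 0 ≤ g u := fun u => by
    simp only [hg_def]; positivity
  have hgle : ∀ u, g u ≤ a ^ u := by
    intro u
    have h1 : ξ ^ (4 - u) ≤ 1 := pow_le_one₀ hξ0.le hξ1.le
    calc g u = a ^ u * ξ ^ (4 - u) := rfl
      _ ≤ a ^ u * 1 := mul_le_mul_of_nonneg_left h1 (pow_nonneg ha0 u)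
      _ = a ^ u := mul_one _
  have hgsum : Summable g := Summable.of_nonneg_of_le hg0 hgle hga
  -- bound on T := ∑' g
  have hT : ∑' u, g u ≤ K := by
    rw [← hgsum.sum_add_tsum_nat_add 4]
    have htail : ∑' i : ℕ, g (i + 4) = a ^ 4 * (1 - a)⁻¹ := by
      have he : ∀ i : ℕ, g (i + 4) = a ^ 4 * a ^ i := by
        intro i
        have h4 : 4 - (i + 4) = 0 := by omega
        simp only [hg_def, h4, pow_zero, mul_one, pow_add]
        ring
      simp only [he]
      rw [tsum_mul_left, tsum_geometric_of_lt_one ha0 ha1]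
    have hfin : ∑ i ∈ Finset.range 4, g i ≤ ξ ^ 4 * (1 - a / ξ)⁻¹ := by
      have h1 : ∑ i ∈ Finset.range 4, g i = ξ ^ 4 * ∑ i ∈ Finset.range 4, (a / ξ) ^ i := by
        simp only [hg_def, Finset.sum_range_succ, Finset.sum_range_zero]
        norm_num
        field_simp
      have h2 : ∑ i ∈ Finset.range 4, (a / ξ) ^ i ≤ (1 - a / ξ)⁻¹ := by
        have h3 := (summable_geometric_of_lt_one hq0 hq1).sum_le_tsum (Finset.range 4)
          (fun i _ => pow_nonneg hq0 i)
        rwa [tsum_geometric_of_lt_one hq0 hq1] at h3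
      rw [h1]
      exact mul_le_mul_of_nonneg_left h2 (by positivity)
    rw [hK_def, div_eq_mul_inv, div_eq_mul_inv, htail]
    simpa only [div_eq_mul_inv] using add_le_add hfin (le_refl (a ^ 4 * (1 - a)⁻¹))
  have hTnn : 0 ≤ ∑' u, g u := tsum_nonneg hg0
  -- inner double sum equals closed form
  have hinner : ∀ j : ℕ,
      (∑' u : ℕ, ∑' v : ℕ,
          (16 * (m : ℝ)) ^ (2 * (j + 2 + u)) * ζ ^ (j + 2 + u) *
            ξ ^ ((L : ℤ) +
              (4 * (j : ℤ) + max 0 ((j : ℤ) + 6 - ((j + 2 + u : ℕ) : ℤ)) + (v : ℤ))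
              - 2 * (j : ℤ)))
        = (a ^ (j + 2) * ξ ^ (L + 2 * j) * (1 - ξ)⁻¹) * ∑' u, g u := by
    intro j
    have hterm : ∀ u v : ℕ,
        (16 * (m : ℝ)) ^ (2 * (j + 2 + u)) * ζ ^ (j + 2 + u) *
            ξ ^ ((L : ℤ) +
              (4 * (j : ℤ) + max 0 ((j : ℤ) + 6 - ((j + 2 + u : ℕ) : ℤ)) + (v : ℤ))
              - 2 * (j : ℤ))
          = (a ^ (j + 2) * ξ ^ (L + 2 * j) * g u) * ξ ^ v := by
      intro u v
      have e1 : (16 * (m : ℝ)) ^ (2 * (j + 2 + u)) * ζ ^ (j + 2 + u) = a ^ (j + 2 + u) := by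
        rw [ha_def]
        conv_rhs => rw [mul_pow, ← pow_mul]
      have eE : (L : ℤ) +
          (4 * (j : ℤ) + max 0 ((j : ℤ) + 6 - ((j + 2 + u : ℕ) : ℤ)) + (v : ℤ))
          - 2 * (j : ℤ) = ((L + 2 * j + (4 - u) + v : ℕ) : ℤ) := by
        push_cast
        omega
      rw [e1, eE, zpow_natCast]
      simp only [hg_def, pow_add]
      ring
    calc (∑' u : ℕ, ∑' v : ℕ,
          (16 * (m : ℝ)) ^ (2 * (j + 2 + u)) * ζ ^ (j + 2 + u) *
            ξ ^ ((L : ℤ) +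
              (4 * (j : ℤ) + max 0 ((j : ℤ) + 6 - ((j + 2 + u : ℕ) : ℤ)) + (v : ℤ))
              - 2 * (j : ℤ)))
        = ∑' u : ℕ, (a ^ (j + 2) * ξ ^ (L + 2 * j) * (1 - ξ)⁻¹) * g u := by
          apply tsum_congr
          intro u
          simp only [hterm]
          rw [tsum_mul_left, tsum_geometric_of_lt_one hξ0.le hξ1]
          ring
      _ = (a ^ (j + 2) * ξ ^ (L + 2 * j) * (1 - ξ)⁻¹) * ∑' u, g u := tsum_mul_left
  -- main chain
  have hchoose : ∀ j : ℕ, (L.choose (j + 1) : ℝ) * ((j : ℝ) + 1)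
      = (L : ℝ) * ((L - 1).choose j : ℝ) := by
    intro j
    have h1 := Nat.add_one_mul_choose_eq (L - 1) j
    have h2 : L - 1 + 1 = L := by omega
    rw [h2] at h1
    have : L * (L - 1).choose j = L.choose (j + 1) * (j + 1) := h1
    exact_mod_cast congrArg (fun n : ℕ => (n : ℝ)) this.symm
  have hx0 : 0 ≤ a * ξ ^ 2 := by positivity
  calc (∑ j ∈ Finset.range (L + 1),
        (Nat.choose L (j + 1) : ℝ) * ((j : ℝ) + 1) *
          ∑' u : ℕ, ∑' v : ℕ,
            (16 * (m : ℝ)) ^ (2 * (j + 2 + u)) * ζ ^ (j + 2 + u) *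
              ξ ^ ((L : ℤ) +
                (4 * (j : ℤ) + max 0 ((j : ℤ) + 6 - ((j + 2 + u : ℕ) : ℤ)) + (v : ℤ))
                - 2 * (j : ℤ)))
      = ∑ j ∈ Finset.range (L + 1),
        (Nat.choose L (j + 1) : ℝ) * ((j : ℝ) + 1) *
          ((a ^ (j + 2) * ξ ^ (L + 2 * j) * (1 - ξ)⁻¹) * ∑' u, g u) := by
        exact Finset.sum_congr rfl fun j _ => by rw [hinner j]
    _ ≤ ∑ j ∈ Finset.range (L + 1),
        (Nat.choose L (j + 1) : ℝ) * ((j : ℝ) + 1) *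
          ((a ^ (j + 2) * ξ ^ (L + 2 * j) * (1 - ξ)⁻¹) * K) := by
        apply Finset.sum_le_sum
        intro j _
        have hc : (0:ℝ) ≤ (Nat.choose L (j + 1) : ℝ) * ((j : ℝ) + 1) := by positivity
        have hd : (0:ℝ) ≤ a ^ (j + 2) * ξ ^ (L + 2 * j) * (1 - ξ)⁻¹ := by
          have := h1ξ.le
          positivity
        exact mul_le_mul_of_nonneg_left (mul_le_mul_of_nonneg_left hT hd) hc
    _ = (a ^ 2 * ξ ^ L * (1 - ξ)⁻¹ * K) *
        ∑ j ∈ Finset.range (L + 1), ((L : ℝ) * ((L - 1).choose j : ℝ)) * (a * ξ ^ 2) ^ j := by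
        rw [Finset.mul_sum]
        apply Finset.sum_congr rfl
        intro j _
        rw [hchoose j]
        simp only [pow_add, pow_mul, mul_pow]
        ring
    _ ≤ (a ^ 2 * ξ ^ L * (1 - ξ)⁻¹ * K) * ((L : ℝ) * (1 + a * ξ ^ 2) ^ L) := by
        have hcoef : (0:ℝ) ≤ a ^ 2 * ξ ^ L * (1 - ξ)⁻¹ * K := by
          have := h1ξ.le
          positivity
        apply mul_le_mul_of_nonneg_left _ hcoef
        have hsum : ∑ j ∈ Finset.range (L + 1), ((L : ℝ) * ((L - 1).choose j : ℝ)) * (a * ξ ^ 2) ^ j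
            ≤ (L : ℝ) * ∑ j ∈ Finset.range (L + 1), ((L).choose j : ℝ) * (a * ξ ^ 2) ^ j := by
          rw [Finset.mul_sum]
          apply Finset.sum_le_sum
          intro j _
          rw [mul_assoc]
          apply mul_le_mul_of_nonneg_left _ (by positivity)
          apply mul_le_mul_of_nonneg_right _ (pow_nonneg hx0 j)
          exact_mod_cast Nat.choose_le_choose j (Nat.sub_le L 1)
        have hbin : ∑ j ∈ Finset.range (L + 1), ((L).choose j : ℝ) * (a * ξ ^ 2) ^ j
            = (1 + a * ξ ^ 2) ^ L := by
          rw [show (1 + a * ξ ^ 2) = (a * ξ ^ 2 + 1) by ring, add_pow]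
          apply Finset.sum_congr rfl
          intro j _
          simp [mul_comm]
        rw [hbin] at hsum
        exact hsum
    _ = ξ ^ L * (16 * (m : ℝ)) ^ 4 * ζ ^ 2 * (L : ℝ) *
          (1 + a * ξ ^ 2) ^ L / (1 - ξ) *
        (ξ ^ 4 / (1 - a / ξ) + (16 * (m : ℝ)) ^ 8 * ζ ^ 4 / (1 - a)) := by
        rw [hK_def, ha_def]
        ring
end
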